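/- Let ξ ∈ ℂⁿ (n ≥ 2) have pairwise distinct coordinates, let x ∈ ℂⁿ, 1 ≤ p ≤ ∞ with conjugate exponent q, a = (n-1)^{1/q}, b = 2^{1/q}, and suppose E := ‖(x - ξ)/d(ξ)‖_p < R = 2/(b + 1 + √((b-1)² + 8a)). If in addition y ∈ ℂⁿ satisfies |yⱼ - ξⱼ| ≤ |xⱼ - ξⱼ| for all j, and i is an index with xᵢ ≠ ξⱼ and xᵢ ≠ yⱼ for all j ≠ i, then the quantity σᵢ = (xᵢ - ξᵢ) ∑_{j ≠ i} (yⱼ - ξⱼ)/((xᵢ - ξⱼ)(xᵢ - yⱼ)) satisfies |σᵢ| ≤ aE²/((1 - E)(1 - bE)) < 1. -/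

import Mathlib

open scoped ENNReal

noncomputable def pnorm (p : ℝ≥0∞) {n : ℕ} (w : Fin n → ℝ) : ℝ :=
  ‖(WithLp.equiv p (Fin n → ℝ)).symm w‖

noncomputable def dmin {n : ℕ} (v : Fin n → ℂ) (i : Fin n) : ℝ :=
  ⨅ j : {j : Fin n // j ≠ i}, ‖v i - v j.1‖

/-!
Write `wₖ = |xₖ - ξₖ| / dₖ(ξ)`, so that `E = ‖w‖_p`. By Hölder's inequality against the
indicator of a set `S` of indices, `∑_{k ∈ S} wₖ ≤ |S|^{1/q} E`: each `wₖ` is at most `E`, two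
of them add up to at most `bE`, and the `wⱼ` with `j ≠ i` add up to at most `aE`. The triangle
inequality then gives `|xᵢ - ξⱼ| ≥ (1 - E) dᵢ` and `|xᵢ - yⱼ| ≥ (1 - bE) dⱼ`, so the `j`-th
summand of `σᵢ` is at most `wⱼ / ((1 - E)(1 - bE) dᵢ)`; multiplying by `|xᵢ - ξᵢ| = wᵢ dᵢ ≤ E dᵢ`
and summing gives the bound. It is `< 1` because `(1 - E)(1 - bE) - 2aE²` factors as
`(1 - tE)(1 - tE + (2t - 1 - b)E)` with `t = 1/R`, which is positive for `E < R`.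
-/

open Finset

section pnorm

variable {n : ℕ} {p q : ℝ≥0∞}

lemma pnorm_nonneg (hp : 1 ≤ p) (w : Fin n → ℝ) : 0 ≤ pnorm p w :=
  haveI : Fact (1 ≤ p) := ⟨hp⟩
  norm_nonneg _

lemma le_pnorm (hp : 1 ≤ p) (w : Fin n → ℝ) (k : Fin n) : w k ≤ pnorm p w :=
  haveI : Fact (1 ≤ p) := ⟨hp⟩
  (le_abs_self _).trans (PiLp.norm_apply_le (WithLp.toLp p w) k)

lemma toReal_one_div_eq_one_sub (hpq : 1 / p + 1 / q = 1) :
    (1 / q).toReal = 1 - 1 / p.toReal := by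
  have h := congrArg ENNReal.toReal hpq
  rw [ENNReal.toReal_add (ne_top_of_le_ne_top ENNReal.one_ne_top (le_self_add.trans_eq hpq))
    (ne_top_of_le_ne_top ENNReal.one_ne_top (le_add_self.trans_eq hpq)), ENNReal.toReal_one,
    one_div p, ENNReal.toReal_inv] at h
  rw [one_div p.toReal]
  linarith

theorem sum_le_card_rpow_mul_pnorm (hp : 1 ≤ p) (hpq : 1 / p + 1 / q = 1) {w : Fin n → ℝ}
    (hw : ∀ k, 0 ≤ w k) (S : Finset (Fin n)) :
    ∑ j ∈ S, w j ≤ (#S : ℝ) ^ (1 / q).toReal * pnorm p w := by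
  rcases eq_or_ne p ⊤ with rfl | hp_top
  · have hq : 1 / q = 1 := by simpa using hpq
    rw [hq, ENNReal.toReal_one, Real.rpow_one, ← nsmul_eq_mul, ← sum_const]
    exact sum_le_sum fun k _ => le_pnorm hp w k
  have hr : 1 ≤ p.toReal := ENNReal.toReal_mono hp_top hp |>.trans_eq' ENNReal.toReal_one.symm
  have hpnorm : pnorm p w = (∑ k, w k ^ p.toReal) ^ (1 / p.toReal) := by
    rw [pnorm, PiLp.norm_eq_sum (by positivity)]
    simp [Real.norm_of_nonneg (hw _)]
  have hS : ∀ k ∈ S, 0 ≤ w k := fun k _ => hw k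
  calc ∑ j ∈ S, w j = ((∑ j ∈ S, w j) ^ p.toReal) ^ (1 / p.toReal) := by
        rw [← Real.rpow_mul (sum_nonneg hS), mul_one_div_cancel (by positivity), Real.rpow_one]
    _ ≤ ((#S : ℝ) ^ (p.toReal - 1) * ∑ j ∈ S, w j ^ p.toReal) ^ (1 / p.toReal) :=
        Real.rpow_le_rpow (Real.rpow_nonneg (sum_nonneg hS) _)
          (Real.rpow_sum_le_const_mul_sum_rpow_of_nonneg S hr hS) (by positivity)
    _ = (#S : ℝ) ^ (1 - 1 / p.toReal) * (∑ j ∈ S, w j ^ p.toReal) ^ (1 / p.toReal) := by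
        rw [Real.mul_rpow (by positivity) (sum_nonneg fun k _ => Real.rpow_nonneg (hw k) _),
          ← Real.rpow_mul (by positivity)]
        congr 2
        field_simp
    _ ≤ (#S : ℝ) ^ (1 / q).toReal * pnorm p w := by
        rw [toReal_one_div_eq_one_sub hpq, hpnorm]
        gcongr
        · exact sum_nonneg fun k _ => Real.rpow_nonneg (hw k) _
        · exact fun k _ _ => Real.rpow_nonneg (hw k) _
        · exact subset_univ S

lemma sum_erase_le_pnorm (hp : 1 ≤ p) (hpq : 1 / p + 1 / q = 1) {w : Fin n → ℝ}
    (hw : ∀ k, 0 ≤ w k) (i : Fin n) :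
    ∑ j ∈ univ.erase i, w j ≤ ((n : ℝ) - 1) ^ (1 / q).toReal * pnorm p w := by
  have hcard : (#(univ.erase i) : ℝ) = n - 1 := by
    rw [card_erase_of_mem (mem_univ i), card_univ, Fintype.card_fin,
      Nat.cast_pred (Fin.pos i)]
  exact hcard ▸ sum_le_card_rpow_mul_pnorm hp hpq hw _

lemma add_le_pnorm (hp : 1 ≤ p) (hpq : 1 / p + 1 / q = 1) {w : Fin n → ℝ}
    (hw : ∀ k, 0 ≤ w k) {i j : Fin n} (hij : i ≠ j) :
    w i + w j ≤ 2 ^ (1 / q).toReal * pnorm p w := by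
  have h := sum_le_card_rpow_mul_pnorm hp hpq hw {i, j}
  rwa [sum_pair hij, card_pair hij, Nat.cast_two] at h

end pnorm

-- The smaller root of `(1 - R)(1 - bR) = 2aR²`.
noncomputable def critRadius (a b : ℝ) : ℝ := 2 / (b + 1 + √((b - 1) ^ 2 + 8 * a))

lemma quadratic_bounds_of_mul_lt_one {a b t E : ℝ} (ht : 1 ≤ t) (htb : b ≤ t)
    (hroot : (t - 1) * (t - b) = 2 * a) (hE : 0 ≤ E) (htE : t * E < 1) :
    0 < 1 - E ∧ 0 < 1 - b * E ∧ 2 * a * E ^ 2 < (1 - E) * (1 - b * E) := by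
  refine ⟨by nlinarith, by nlinarith, ?_⟩
  have key : (1 - E) * (1 - b * E) - 2 * a * E ^ 2
      = (1 - t * E) * ((1 - t * E) + ((t - 1) + (t - b)) * E) := by
    rw [← hroot]; ring
  nlinarith [mul_pos (sub_pos.2 htE) (add_pos_of_pos_of_nonneg (sub_pos.2 htE)
    (mul_nonneg (add_nonneg (sub_nonneg.2 ht) (sub_nonneg.2 htb)) hE))]

lemma quadratic_bounds_of_lt_critRadius {a b E : ℝ} (ha : 0 ≤ a) (hE : 0 ≤ E)
    (hER : E < critRadius a b) :
    0 < 1 - E ∧ 0 < 1 - b * E ∧ 2 * a * E ^ 2 < (1 - E) * (1 - b * E) := by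
  set s := √((b - 1) ^ 2 + 8 * a)
  have hs : |b - 1| ≤ s := Real.abs_le_sqrt (by linarith)
  have hs2 : s ^ 2 = (b - 1) ^ 2 + 8 * a := Real.sq_sqrt (by positivity)
  obtain ⟨hs₁, hs₂⟩ := abs_le.1 hs
  apply quadratic_bounds_of_mul_lt_one (t := (b + 1 + s) / 2) (by linarith) (by linarith)
    (by linear_combination hs2 / 4) hE
  have h := (lt_div_iff₀ (by linarith)).1 hER
  linarith

section dmin

variable {n : ℕ}

lemma dmin_le_norm_sub (v : Fin n → ℂ) {i j : Fin n} (hji : j ≠ i) :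
    dmin v i ≤ ‖v i - v j‖ :=
  ciInf_le (Set.finite_range _).bddBelow (⟨j, hji⟩ : {j : Fin n // j ≠ i})

lemma dmin_pos (hn : 2 ≤ n) {v : Fin n → ℂ} (hv : Function.Injective v) (i : Fin n) :
    0 < dmin v i := by
  obtain ⟨j, hji⟩ := Fintype.exists_ne_of_one_lt_card (by rw [Fintype.card_fin]; omega) i
  have : Nonempty {j : Fin n // j ≠ i} := ⟨⟨j, hji⟩⟩
  obtain ⟨k, hk⟩ := exists_eq_ciInf_of_finite (f := fun k : {j : Fin n // j ≠ i} => ‖v i - v k‖)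
  rw [dmin, ← hk, norm_pos_iff, sub_ne_zero]
  exact hv.ne k.2.symm

noncomputable def relDist (ξ x : Fin n → ℂ) (k : Fin n) : ℝ := ‖x k - ξ k‖ / dmin ξ k

variable {ξ x y : Fin n → ℂ}

lemma relDist_nonneg (k : Fin n) : 0 ≤ relDist ξ x k :=
  div_nonneg (norm_nonneg _) (Real.iInf_nonneg fun _ => norm_nonneg _)

lemma norm_sub_eq_relDist_mul (hd : ∀ k, 0 < dmin ξ k) (k : Fin n) :
    ‖x k - ξ k‖ = relDist ξ x k * dmin ξ k :=
  (div_mul_cancel₀ _ (hd k).ne').symm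

noncomputable def sigmaTerm (ξ x y : Fin n → ℂ) (i : Fin n) : ℂ :=
  (x i - ξ i) * ∑ j ∈ univ.erase i, (y j - ξ j) / ((x i - ξ j) * (x i - y j))

section estimates

variable (hd : ∀ k, 0 < dmin ξ k) {i j : Fin n} {b c E : ℝ}
include hd

lemma one_sub_mul_dmin_le_norm_sub (hE : relDist ξ x i ≤ E) (hji : j ≠ i) :
    (1 - E) * dmin ξ i ≤ ‖x i - ξ j‖ := by
  have := norm_sub_le_norm_sub_add_norm_sub (ξ i) (x i) (ξ j)
  rw [norm_sub_rev (ξ i) (x i), norm_sub_eq_relDist_mul hd] at this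
  nlinarith [dmin_le_norm_sub ξ hji, hd i]

lemma one_sub_mul_dmin_le_norm_sub_of_norm_le (hy : ‖y j - ξ j‖ ≤ ‖x j - ξ j‖)
    (hc : relDist ξ x i + relDist ξ x j ≤ c) (hc1 : c ≤ 1) (hji : j ≠ i) :
    (1 - c) * dmin ξ j ≤ ‖x i - y j‖ := by
  have hdi := dmin_le_norm_sub ξ hji
  have hdj : dmin ξ j ≤ ‖ξ i - ξ j‖ := norm_sub_rev (ξ j) (ξ i) ▸ dmin_le_norm_sub ξ hji.symm
  have htri₁ := norm_sub_le_norm_sub_add_norm_sub (ξ i) (y j) (ξ j)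
  have htri₂ := norm_sub_le_norm_sub_add_norm_sub (ξ i) (x i) (y j)
  rw [norm_sub_rev (ξ i) (x i), norm_sub_eq_relDist_mul hd] at htri₂
  rw [norm_sub_eq_relDist_mul (x := x) hd] at hy
  have hwi := mul_le_mul_of_nonneg_left hdi (relDist_nonneg (ξ := ξ) (x := x) i)
  have hwj := mul_le_mul_of_nonneg_left hdj (relDist_nonneg (ξ := ξ) (x := x) j)
  have hcj := mul_le_mul_of_nonneg_left hdj (sub_nonneg.2 hc1)
  have hcD := mul_le_mul_of_nonneg_right hc (norm_nonneg (ξ i - ξ j))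
  linarith

lemma norm_sigmaTerm_summand_le (hy : ‖y j - ξ j‖ ≤ ‖x j - ξ j‖) (hEi : relDist ξ x i ≤ E)
    (hij : relDist ξ x i + relDist ξ x j ≤ b * E) (hE : 0 < 1 - E) (hbE : 0 < 1 - b * E)
    (hji : j ≠ i) :
    ‖(y j - ξ j) / ((x i - ξ j) * (x i - y j))‖
      ≤ relDist ξ x j / ((1 - E) * (1 - b * E) * dmin ξ i) := by
  have hdi := hd i
  have hdj := hd j
  calc ‖(y j - ξ j) / ((x i - ξ j) * (x i - y j))‖
      = ‖y j - ξ j‖ / (‖x i - ξ j‖ * ‖x i - y j‖) := by rw [norm_div, norm_mul]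
    _ ≤ relDist ξ x j * dmin ξ j / ((1 - E) * dmin ξ i * ((1 - b * E) * dmin ξ j)) := by
        apply div_le_div₀ (mul_nonneg (relDist_nonneg j) hdj.le)
          (hy.trans_eq (norm_sub_eq_relDist_mul hd j)) (by positivity)
        exact mul_le_mul (one_sub_mul_dmin_le_norm_sub hd hEi hji)
          (one_sub_mul_dmin_le_norm_sub_of_norm_le hd hy hij (sub_nonneg.1 hbE.le) hji)
          (by positivity) (norm_nonneg _)
    _ = relDist ξ x j / ((1 - E) * (1 - b * E) * dmin ξ i) := by
        field_simp

theorem norm_sigmaTerm_le (hy : ∀ j, ‖y j - ξ j‖ ≤ ‖x j - ξ j‖) (hEi : relDist ξ x i ≤ E)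
    (hij : ∀ j, j ≠ i → relDist ξ x i + relDist ξ x j ≤ b * E) (hE : 0 < 1 - E)
    (hbE : 0 < 1 - b * E) :
    ‖sigmaTerm ξ x y i‖
      ≤ relDist ξ x i * (∑ j ∈ univ.erase i, relDist ξ x j) / ((1 - E) * (1 - b * E)) := by
  rw [sigmaTerm, norm_mul, norm_sub_eq_relDist_mul hd i]
  calc relDist ξ x i * dmin ξ i * ‖∑ j ∈ univ.erase i, (y j - ξ j) / ((x i - ξ j) * (x i - y j))‖
      ≤ relDist ξ x i * dmin ξ i *
          ∑ j ∈ univ.erase i, relDist ξ x j / ((1 - E) * (1 - b * E) * dmin ξ i) := by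
        gcongr
        · exact mul_nonneg (relDist_nonneg i) (hd i).le
        refine (norm_sum_le _ _).trans (sum_le_sum fun j hj => ?_)
        have hji := ne_of_mem_erase hj
        exact norm_sigmaTerm_summand_le hd (hy j) hEi (hij j hji) hE hbE hji
    _ = relDist ξ x i * (∑ j ∈ univ.erase i, relDist ξ x j) / ((1 - E) * (1 - b * E)) := by
        rw [← sum_div]
        field_simp [(hd i).ne']

end estimates

end dmin

theorem sigma_estimate_general (n : ℕ) (hn : 2 ≤ n) (ξ x y : Fin n → ℂ)
    (hξ : Function.Injective ξ) (p q : ℝ≥0∞) (hp : 1 ≤ p) (hpq : 1/p + 1/q = 1)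
    (a b E : ℝ)
    (ha : a = ((n:ℝ) - 1) ^ (1/q).toReal) (hb : b = (2:ℝ) ^ (1/q).toReal)
    (hE : E = pnorm p (fun k => ‖x k - ξ k‖ / dmin ξ k))
    (hER : E < 2 / (b + 1 + Real.sqrt ((b - 1)^2 + 8*a)))
    (hy : ∀ j, ‖y j - ξ j‖ ≤ ‖x j - ξ j‖)
    (i : Fin n) :
    ‖(x i - ξ i) * ∑ j ∈ Finset.univ.erase i,
        (y j - ξ j) / ((x i - ξ j) * (x i - y j))‖
      ≤ a * E^2 / ((1 - E) * (1 - b*E)) ∧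
    a * E^2 / ((1 - E) * (1 - b*E)) < 1 := by
  change E = pnorm p (relDist ξ x) at hE
  have hd := dmin_pos hn hξ
  have hE0 : 0 ≤ E := hE ▸ pnorm_nonneg hp _
  have ha0 : 0 ≤ a := ha ▸ Real.rpow_nonneg (by norm_num; omega) _
  obtain ⟨h1E, h1bE, hquad⟩ := quadratic_bounds_of_lt_critRadius ha0 hE0 hER
  have hEi : relDist ξ x i ≤ E := hE ▸ le_pnorm hp _ i
  have hsum : ∑ j ∈ univ.erase i, relDist ξ x j ≤ a * E :=
    ha ▸ hE ▸ sum_erase_le_pnorm hp hpq relDist_nonneg i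
  have hpair : ∀ j, j ≠ i → relDist ξ x i + relDist ξ x j ≤ b * E :=
    fun j hji => hb ▸ hE ▸ add_le_pnorm hp hpq relDist_nonneg hji.symm
  refine ⟨(norm_sigmaTerm_le hd hy hEi hpair h1E h1bE).trans ?_, ?_⟩
  · calc relDist ξ x i * (∑ j ∈ univ.erase i, relDist ξ x j) / ((1 - E) * (1 - b * E))
        ≤ E * (a * E) / ((1 - E) * (1 - b * E)) := by
          gcongr
          exact sum_nonneg fun j _ => relDist_nonneg j
      _ = a * E ^ 2 / ((1 - E) * (1 - b * E)) := by ring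
  · rw [div_lt_one (mul_pos h1E h1bE)]
    linarith [mul_nonneg ha0 (sq_nonneg E)]

theorem sigma_estimate (n : ℕ) (hn : 2 ≤ n) (ξ x y : Fin n → ℂ)
    (hξ : Function.Injective ξ) (p q : ℝ≥0∞) (hp : 1 ≤ p) (hpq : 1/p + 1/q = 1)
    (a b E : ℝ)
    (ha : a = ((n:ℝ) - 1) ^ (1/q).toReal) (hb : b = (2:ℝ) ^ (1/q).toReal)
    (hE : E = pnorm p (fun k => ‖x k - ξ k‖ / dmin ξ k))
    (hER : E < 2 / (b + 1 + Real.sqrt ((b - 1)^2 + 8*a)))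
    (hy : ∀ j, ‖y j - ξ j‖ ≤ ‖x j - ξ j‖)
    (i : Fin n) (hxξ : ∀ j, j ≠ i → x i ≠ ξ j) (hxy : ∀ j, j ≠ i → x i ≠ y j) :
    ‖(x i - ξ i) * ∑ j ∈ Finset.univ.erase i,
        (y j - ξ j) / ((x i - ξ j) * (x i - y j))‖
      ≤ a * E^2 / ((1 - E) * (1 - b*E)) ∧
    a * E^2 / ((1 - E) * (1 - b*E)) < 1 :=
  sigma_estimate_general n hn ξ x y hξ p q hp hpq a b E ha hb hE hER hy i
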